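/- For every semi-binary phylogenetic network N, the number of non-isomorphic cherry covers of the bulged version B(N) equals the number of support trees of N. -/

import Mathlib

open Classical

structure MGraph (V A : Type) where
  tail : A → V
  head : A → V

namespace MGraph

variable {V A : Type} [Fintype V] [Fintype A] [DecidableEq V] [DecidableEq A]

variable (D : MGraph V A)

def indeg (v : V) : ℕ := Fintype.card {a : A // D.head a = v}
def outdeg (v : V) : ℕ := Fintype.card {a : A // D.tail a = v}

def IsRoot (v : V) : Prop := D.indeg v = 0 ∧ D.outdeg v = 1
def IsLeaf (v : V) : Prop := D.indeg v = 1 ∧ D.outdeg v = 0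
def IsTreeNode (v : V) : Prop := D.indeg v = 1 ∧ 2 ≤ D.outdeg v
def IsRetic (v : V) : Prop := 2 ≤ D.indeg v ∧ D.outdeg v = 1

def Acyclic : Prop := ∃ rank : V → ℕ, ∀ a : A, rank (D.tail a) < rank (D.head a)
def NoParallel : Prop := ∀ a b : A, D.tail a = D.tail b → D.head a = D.head b → a = b
def IsRootArc (e : A) : Prop := D.IsRoot (D.tail e)

/-- (non-binary) phylogenetic network -/
def IsPhylo : Prop :=
  D.Acyclic ∧ D.NoParallel ∧ (∃! v : V, D.IsRoot v) ∧
    ∀ v : V, D.IsRoot v ∨ D.IsLeaf v ∨ D.IsTreeNode v ∨ D.IsRetic v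

def IsSemiBinary : Prop := D.IsPhylo ∧ ∀ v : V, D.IsTreeNode v → D.outdeg v = 2
def IsBinary : Prop := D.IsSemiBinary ∧ ∀ v : V, D.IsRetic v → D.indeg v = 2

/-- A support tree: keep all non-reticulation arcs, exactly one incoming arc per
reticulation, and create no new leaves. -/
def IsSupportTree (S : Set A) : Prop :=
  (∀ a : A, ¬ D.IsRetic (D.head a) → a ∈ S) ∧
  (∀ v : V, D.IsRetic v → ∃! a : A, a ∈ S ∧ D.head a = v) ∧
  (∀ v : V, ¬ D.IsLeaf v → ∃ a ∈ S, D.tail a = v)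

def IsTreeBased : Prop := ∃ S : Set A, D.IsSupportTree S

def IsTreeChild : Prop :=
  ∀ v : V, ¬ D.IsLeaf v → ∃ e : A, D.tail e = v ∧ (D.IsTreeNode (D.head e) ∨ D.IsLeaf (D.head e))

/-- A cherry shape: two arcs with common tail and distinct heads. -/
def IsCherryShape (s : Finset A) : Prop :=
  ∃ a b : A, a ≠ b ∧ s = {a, b} ∧ D.tail a = D.tail b ∧ D.head a ≠ D.head b

/-- A reticulated cherry shape with designated middle arc `mid`; node-type
predicates `tn` (tree node) and `rt` (reticulation) are parameters so that the
definition also applies to the bulged version of a network. -/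
def IsRCShapeMid (tn rt : V → Prop) (s : Finset A) (mid : A) : Prop :=
  ∃ bot top : A, bot ≠ mid ∧ bot ≠ top ∧ mid ≠ top ∧ s = {bot, mid, top} ∧
    D.head mid = D.tail bot ∧ D.tail mid = D.tail top ∧ rt (D.tail bot) ∧ tn (D.tail mid)

def IsRCShape (tn rt : V → Prop) (s : Finset A) : Prop := ∃ mid : A, D.IsRCShapeMid tn rt s mid

/-- A cherry cover: every arc except root arcs lies in exactly one shape. -/
def IsCherryCoverG (tn rt : V → Prop) (isRoot : A → Prop) (P : Finset (Finset A)) : Prop :=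
  (∀ s ∈ P, D.IsCherryShape s ∨ D.IsRCShape tn rt s) ∧
  (∀ e : A, ¬ isRoot e → ∃! s : Finset A, s ∈ P ∧ e ∈ s) ∧
  (∀ s ∈ P, ∀ e ∈ s, ¬ isRoot e)

def IsCherryCover (P : Finset (Finset A)) : Prop :=
  D.IsCherryCoverG D.IsTreeNode D.IsRetic D.IsRootArc P

/-- `Q` covers exactly the arc set `T` with cherry and reticulated cherry shapes. -/
def CoversExactly (tn rt : V → Prop) (T : Set A) (Q : Finset (Finset A)) : Prop :=
  (∀ s ∈ Q, D.IsCherryShape s ∨ D.IsRCShape tn rt s) ∧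
  (∀ s ∈ Q, ∀ e ∈ s, e ∈ T) ∧ (∀ e ∈ T, ∃! s : Finset A, s ∈ Q ∧ e ∈ s)

/-- `Q` covers exactly the arc set `T` using only reticulated cherry shapes. -/
def CoversExactlyRC (tn rt : V → Prop) (T : Set A) (Q : Finset (Finset A)) : Prop :=
  (∀ s ∈ Q, D.IsRCShape tn rt s) ∧
  (∀ s ∈ Q, ∀ e ∈ s, e ∈ T) ∧ (∀ e ∈ T, ∃! s : Finset A, s ∈ Q ∧ e ∈ s)

/-- Multiplicity of an arc in the bulged version. -/
noncomputable def bulgeMult (a : A) : ℕ :=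
  if D.IsRetic (D.tail a) then D.indeg (D.tail a) - 1 else 1

/-- Arcs of the bulged version `B(N)`. -/
abbrev BArc : Type := Σ a : A, Fin (D.bulgeMult a)

def Bulged : MGraph V D.BArc := ⟨fun p => D.tail p.1, fun p => D.head p.1⟩

/-- A cherry cover of the bulged version, with node types taken from `N`. -/
def IsBulgedCherryCover (P : Finset (Finset D.BArc)) : Prop :=
  D.Bulged.IsCherryCoverG (fun v => D.IsTreeNode v) (fun v => D.IsRetic v)
    (fun e => D.IsRootArc e.1) P

/-- Isomorphism class of a bulged cherry cover: forget which parallel copy is used. -/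
noncomputable def coverClass (P : Finset (Finset D.BArc)) : Multiset (Finset A) :=
  P.val.map (fun s => s.image (fun e => e.1))

/-- Zig-zag trail: a nonempty sequence of distinct arcs alternately sharing heads
and tails. -/
def IsZZ (l : List A) : Prop :=
  l ≠ [] ∧ l.Nodup ∧
    (((∀ (i : ℕ) (x y : A), l[2*i]? = some x → l[2*i+1]? = some y → D.head x = D.head y) ∧
      (∀ (i : ℕ) (x y : A), l[2*i+1]? = some x → l[2*i+2]? = some y → D.tail x = D.tail y)) ∨
     ((∀ (i : ℕ) (x y : A), l[2*i]? = some x → l[2*i+1]? = some y → D.tail x = D.tail y) ∧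
      (∀ (i : ℕ) (x y : A), l[2*i+1]? = some x → l[2*i+2]? = some y → D.head x = D.head y)))

/-- Maximal zig-zag trail: not properly contained in another zig-zag trail. -/
def IsMaxZZ (l : List A) : Prop := D.IsZZ l ∧ ∀ l' : List A, D.IsZZ l' → l.Sublist l' → l' = l

/-- A fence decomposition, as a partition of the non-root arcs into arc sets of
maximal zig-zag trails. -/
def IsFenceDecomp (P : Set (Set A)) : Prop :=
  (∀ s ∈ P, ∃ l : List A, D.IsMaxZZ l ∧ {e : A | e ∈ l} = s) ∧
  (∀ s ∈ P, ∀ t ∈ P, s ≠ t → Disjoint s t) ∧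
  ⋃₀ P = {e : A | ¬ D.IsRootArc e}

/-- W-fence (binary definition). -/
def IsWFence (l : List A) : Prop :=
  D.IsMaxZZ l ∧ 2 ≤ l.length ∧ Even l.length ∧
  (∀ x, l.head? = some x → D.IsRetic (D.tail x)) ∧
  (∀ y, l.getLast? = some y → D.IsRetic (D.tail y))

/-- A (not necessarily maximal) crown: a closed zig-zag trail of even length ≥ 4. -/
def IsCrownCycle (l : List A) : Prop :=
  D.IsZZ l ∧ 4 ≤ l.length ∧ Even l.length ∧
  ∀ x y, l.head? = some x → l.getLast? = some y → (D.head x = D.head y ∨ D.tail x = D.tail y)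

def IsCrownTrail (l : List A) : Prop := D.IsMaxZZ l ∧ D.IsCrownCycle l

def ContainsCrown (l : List A) : Prop := ∃ m : List A, D.IsCrownCycle m ∧ m.IsInfix l

/-- M-fence: maximal zig-zag trail of even length, not a crown, all tails tree nodes. -/
def IsMFence (l : List A) : Prop :=
  D.IsMaxZZ l ∧ Even l.length ∧ ¬ D.IsCrownTrail l ∧ ∀ e ∈ l, D.IsTreeNode (D.tail e)

/-- W-fence (crown-free version, for non-binary networks). -/
def IsWFenceNC (l : List A) : Prop :=
  D.IsMaxZZ l ∧ Even l.length ∧ ¬ D.ContainsCrown l ∧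
  (∀ x, l.head? = some x → D.IsRetic (D.tail x)) ∧
  (∀ y, l.getLast? = some y → D.IsRetic (D.tail y))

/-- Lower W-crown. -/
def IsLowerWCrown (l : List A) : Prop :=
  D.IsZZ l ∧ ∃ p cr : List A, l = p ++ cr ∧ Odd p.length ∧ ¬ D.ContainsCrown p ∧
    D.IsCrownCycle cr ∧
    (∀ x y, p.getLast? = some x → cr.head? = some y → D.head x = D.head y) ∧
    (∀ x, p.head? = some x → D.IsRetic (D.tail x))

/-- Double-crown: two crowns joined by a crown-free trail. -/
def IsDoubleCrown (l : List A) : Prop :=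
  D.IsZZ l ∧ ∃ p q r : List A, l = p ++ q ++ r ∧ D.IsCrownCycle p ∧ D.IsCrownCycle r ∧
    ¬ D.ContainsCrown q

def ArcsOf (F : Set (List A)) : Set A := {e : A | ∃ l ∈ F, e ∈ l}

def Intersects (l1 l2 : List A) : Prop := ∃ e : A, e ∈ l1 ∧ e ∈ l2

/-- Extended zig-zag trail: a set of maximal zig-zag trails chain-connected by
pairwise intersection. -/
def IsExtZZ (F : Set (List A)) : Prop :=
  F.Nonempty ∧ (∀ l ∈ F, D.IsMaxZZ l) ∧
  ∀ l1 ∈ F, ∀ l2 ∈ F,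
    Relation.ReflTransGen (fun x y : List A => x ∈ F ∧ y ∈ F ∧ Intersects x y) l1 l2

def IsMaxExtZZ (F : Set (List A)) : Prop :=
  D.IsExtZZ F ∧ ∀ G : Set (List A), D.IsExtZZ G → F ⊆ G → G = F

def VertsOf (F : Set (List A)) : Set V :=
  {w : V | ∃ e ∈ ArcsOf F, D.tail e = w ∨ D.head e = w}

/-- The free endpoint of an extremal arc of a trail. -/
noncomputable def frontEnd (x : A) : V := if D.IsRetic (D.tail x) then D.tail x else D.head x

/-- Endpoints of a zig-zag trail. -/
def EndsSet (l : List A) : Set V :=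
  {w : V | (∃ x, l.head? = some x ∧ w = D.frontEnd x) ∨ (∃ y, l.getLast? = some y ∧ w = D.frontEnd y)}

/-- `s` is the arc set of a crown contained in (the arcs of) `F`. -/
def CrownIn (F : Set (List A)) (s : Set A) : Prop :=
  ∃ m : List A, D.IsCrownCycle m ∧ {e : A | e ∈ m} = s ∧ s ⊆ ArcsOf F

/-- Endpoints of an extended zig-zag trail (from its non-crown constituents). -/
def EndSetF (F : Set (List A)) : Set V :=
  {w : V | ∃ l ∈ F, ¬ D.ContainsCrown l ∧ w ∈ D.EndsSet l}

def NoCrownsIn (F : Set (List A)) : Prop := ¬ ∃ s : Set A, D.CrownIn F s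

def IsGenNFence (F : Set (List A)) : Prop :=
  D.IsMaxExtZZ F ∧ D.NoCrownsIn F ∧ ∃! u : V, u ∈ D.EndSetF F ∧ D.IsRetic u

def IsGenMFence (F : Set (List A)) : Prop :=
  D.IsMaxExtZZ F ∧ D.NoCrownsIn F ∧ ∀ w ∈ D.EndSetF F, D.IsTreeNode w

def IsGenCrown (F : Set (List A)) : Prop :=
  D.IsMaxExtZZ F ∧ (∃! s : Set A, D.CrownIn F s) ∧ ∀ w ∈ D.EndSetF F, D.IsTreeNode w

end MGraph

-- AUXSTART
set_option linter.unusedSectionVars false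
set_option maxHeartbeats 1000000

namespace MGraph
open Classical

variable {V A : Type} [Fintype V] [Fintype A] [DecidableEq V] [DecidableEq A]
variable {D : MGraph V A}

/-! ### Basic degree lemmas -/

lemma outdeg_pos (a : A) : 1 ≤ D.outdeg (D.tail a) := by
  have : Nonempty {b : A // D.tail b = D.tail a} := ⟨⟨a, rfl⟩⟩
  simpa [outdeg, Nat.succ_le_iff] using Fintype.card_pos_iff.2 this

lemma indeg_pos (a : A) : 1 ≤ D.indeg (D.head a) := by
  have : Nonempty {b : A // D.head b = D.head a} := ⟨⟨a, rfl⟩⟩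
  simpa [indeg, Nat.succ_le_iff] using Fintype.card_pos_iff.2 this

lemma outdeg_two_le {a b : A} (hne : a ≠ b) (h : D.tail a = D.tail b) :
    2 ≤ D.outdeg (D.tail b) := by
  have : 1 < Fintype.card {c : A // D.tail c = D.tail b} :=
    Fintype.one_lt_card_iff.2 ⟨⟨a, h⟩, ⟨b, rfl⟩, by simpa using hne⟩
  exact this

lemma tail_eq_of_outdeg_one {v : V} (h : D.outdeg v = 1) {a b : A}
    (ha : D.tail a = v) (hb : D.tail b = v) : a = b := by
  have := Fintype.card_le_one_iff.1 (le_of_eq h) ⟨a, ha⟩ ⟨b, hb⟩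
  simpa using congrArg Subtype.val this

lemma exists_other_of_outdeg_two {v : V} (h : D.outdeg v = 2) {a : A} (ha : D.tail a = v) :
    ∃ b, D.tail b = v ∧ b ≠ a ∧ ∀ c, D.tail c = v → c = a ∨ c = b := by
  have h2 : Nat.card {c : A // D.tail c = v} = 2 := by
    rw [Nat.card_eq_fintype_card]; exact h
  obtain ⟨y, hy, hyu⟩ := (Nat.card_eq_two_iff' (⟨a, ha⟩ : {c : A // D.tail c = v})).1 h2
  refine ⟨y.1, y.2, fun hb => hy (Subtype.ext hb), fun c hc => ?_⟩
  rcases eq_or_ne c a with h1 | h1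
  · exact Or.inl h1
  · right
    have : (⟨c, hc⟩ : {c : A // D.tail c = v}) = y :=
      hyu _ (fun he => h1 (by simpa using congrArg Subtype.val he))
    exact congrArg Subtype.val this

lemma tail_ne_head (hac : D.Acyclic) (a : A) : D.tail a ≠ D.head a := by
  obtain ⟨r, hr⟩ := hac
  intro h; have := hr a; rw [h] at this; exact lt_irrefl _ this

lemma no_two_cycle (hac : D.Acyclic) {a b : A} (h1 : D.head a = D.tail b) :
    D.head b ≠ D.tail a := by
  obtain ⟨r, hr⟩ := hac
  intro h2
  have ha := hr a; have hb := hr b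
  rw [h1] at ha; rw [h2] at hb; omega

/-! ### Vertex type facts -/

lemma IsRetic.not_treeNode {v : V} (h : D.IsRetic v) : ¬ D.IsTreeNode v := by
  intro h'; have := h.1; have := h'.1; omega

lemma IsRetic.not_root {v : V} (h : D.IsRetic v) : ¬ D.IsRoot v := by
  intro h'; have := h.1; have := h'.1; omega

lemma IsTreeNode.not_root {v : V} (h : D.IsTreeNode v) : ¬ D.IsRoot v := by
  intro h'; have := h.1; have := h'.1; omega

lemma tail_cases (hsb : D.IsSemiBinary) (a : A) :
    D.IsRoot (D.tail a) ∨ D.IsTreeNode (D.tail a) ∨ D.IsRetic (D.tail a) := by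
  rcases hsb.1.2.2.2 (D.tail a) with h | h | h | h
  · exact Or.inl h
  · exact absurd (outdeg_pos a) (by rw [h.2]; omega)
  · exact Or.inr (Or.inl h)
  · exact Or.inr (Or.inr h)

lemma head_cases (hsb : D.IsSemiBinary) (a : A) :
    D.IsLeaf (D.head a) ∨ D.IsTreeNode (D.head a) ∨ D.IsRetic (D.head a) := by
  rcases hsb.1.2.2.2 (D.head a) with h | h | h | h
  · exact absurd (indeg_pos a) (by rw [h.1]; omega)
  · exact Or.inl h
  · exact Or.inr (Or.inl h)
  · exact Or.inr (Or.inr h)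

lemma tn_outdeg_two (hsb : D.IsSemiBinary) {v : V} (h : D.IsTreeNode v) : D.outdeg v = 2 :=
  hsb.2 v h

/-! ### Canonical arcs -/

noncomputable def outArc (D : MGraph V A) [Nonempty A] (v : V) : A :=
  Classical.epsilon (fun a => D.tail a = v)

variable [Nonempty A]

lemma outArc_tail {v : V} (h : ∃ a, D.tail a = v) : D.tail (D.outArc v) = v :=
  Classical.epsilon_spec h

lemma exists_tail_of_outdeg_pos {v : V} (h : 1 ≤ D.outdeg v) : ∃ a, D.tail a = v := by
  have : Nonempty {a : A // D.tail a = v} := Fintype.card_pos_iff.1 (lt_of_lt_of_le Nat.zero_lt_one h)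
  obtain ⟨a, ha⟩ := this; exact ⟨a, ha⟩

lemma outArc_tail_retic {v : V} (h : D.IsRetic v) : D.tail (D.outArc v) = v :=
  outArc_tail (exists_tail_of_outdeg_pos (by rw [h.2]))

lemma outArc_eq_retic {v : V} (h : D.IsRetic v) {a : A} (ha : D.tail a = v) :
    a = D.outArc v :=
  tail_eq_of_outdeg_one h.2 ha (outArc_tail_retic h)

noncomputable def sib (D : MGraph V A) [Nonempty A] (e : A) : A :=
  Classical.epsilon (fun f => D.tail f = D.tail e ∧ f ≠ e)

lemma sib_spec {e : A} (h : D.outdeg (D.tail e) = 2) :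
    D.tail (D.sib e) = D.tail e ∧ D.sib e ≠ e := by
  obtain ⟨b, hb1, hb2, _⟩ := exists_other_of_outdeg_two h rfl
  exact Classical.epsilon_spec (⟨b, hb1, hb2⟩ : ∃ f, D.tail f = D.tail e ∧ f ≠ e)

lemma sib_cases {e : A} (h : D.outdeg (D.tail e) = 2) {c : A} (hc : D.tail c = D.tail e) :
    c = e ∨ c = D.sib e := by
  obtain ⟨b, hb1, hb2, hall⟩ := exists_other_of_outdeg_two h rfl
  have hs := sib_spec h
  rcases hall c hc with h1 | h1
  · exact Or.inl h1
  · rcases hall (D.sib e) hs.1 with h2 | h2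
    · exact absurd h2 hs.2
    · exact Or.inr (h1.trans h2.symm)

lemma sib_sib {e : A} (h : D.outdeg (D.tail e) = 2) : D.sib (D.sib e) = e := by
  have hs := sib_spec h
  have h2 : D.outdeg (D.tail (D.sib e)) = 2 := by rw [hs.1]; exact h
  have hss := sib_spec h2
  rcases sib_cases h (hss.1.trans hs.1) with h1 | h1
  · exact h1
  · exact absurd h1 hss.2

/-! ### Bulged arcs -/

lemma bulgeMult_pos (a : A) : 0 < D.bulgeMult a := by
  unfold bulgeMult
  split_ifs with h
  · have := h.1; omega
  · omega

lemma bulgeMult_eq_one {a : A} (h : ¬ D.IsRetic (D.tail a)) : D.bulgeMult a = 1 :=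
  if_neg h

lemma bulgeMult_outArc {v : V} (h : D.IsRetic v) :
    D.bulgeMult (D.outArc v) = D.indeg v - 1 := by
  unfold bulgeMult
  rw [outArc_tail_retic h, if_pos h]

noncomputable def bar (D : MGraph V A) (a : A) : D.BArc := ⟨a, ⟨0, bulgeMult_pos a⟩⟩

@[simp] lemma bar_fst (a : A) : (D.bar a).1 = a := rfl

lemma barc_eq_of_not_retic {x y : D.BArc} (h : ¬ D.IsRetic (D.tail x.1))
    (he : x.1 = y.1) : x = y := by
  rcases x with ⟨a, i⟩; rcases y with ⟨b, j⟩
  dsimp at he h; subst he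
  have h1 : D.bulgeMult a = 1 := bulgeMult_eq_one h
  have hi := i.isLt; have hj := j.isLt
  have : i = j := Fin.ext (by omega)
  rw [this]

lemma barc_eq_bar {x : D.BArc} (h : ¬ D.IsRetic (D.tail x.1)) : x = D.bar x.1 :=
  barc_eq_of_not_retic h rfl

@[simp] lemma bulged_tail (x : D.BArc) : D.Bulged.tail x = D.tail x.1 := rfl
@[simp] lemma bulged_head (x : D.BArc) : D.Bulged.head x = D.head x.1 := rfl


/-! ### Projections and mids -/

def proj (D : MGraph V A) (σ : Finset D.BArc) : Finset A := σ.image (fun e => e.1)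

def MidIn (D : MGraph V A) (m : A) (s : Finset A) : Prop :=
  m ∈ s ∧ ∃ b ∈ s, D.IsRetic (D.tail b) ∧ D.head m = D.tail b

def suppOf (D : MGraph V A) (M : Multiset (Finset A)) : Set A :=
  {a | ∀ s ∈ M, ¬ D.MidIn a s}

lemma proj_pair (x y : D.BArc) : D.proj {x, y} = {x.1, y.1} := by
  simp [proj]

lemma proj_triple (x y z : D.BArc) : D.proj {x, y, z} = {x.1, y.1, z.1} := by
  simp [proj]

/-! ### Shape structure -/

lemma cherry_struct (hsb : D.IsSemiBinary) {σ : Finset D.BArc}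
    (h : D.Bulged.IsCherryShape σ) :
    ∃ e f : A, e ≠ f ∧ D.tail f = D.tail e ∧ D.head e ≠ D.head f ∧
      D.IsTreeNode (D.tail e) ∧ σ = {D.bar e, D.bar f} := by
  obtain ⟨x, y, hxy, hs, ht, hh⟩ := h
  have ht' : D.tail x.1 = D.tail y.1 := ht
  have hh' : D.head x.1 ≠ D.head y.1 := hh
  have hne : x.1 ≠ y.1 := fun he => hh' (by rw [he])
  have h2 : 2 ≤ D.outdeg (D.tail x.1) := by
    have := outdeg_two_le hne ht'; rw [← ht'] at this; exact this
  have htn : D.IsTreeNode (D.tail x.1) := by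
    rcases tail_cases hsb x.1 with hr | hr | hr
    · exact absurd h2 (by rw [hr.2]; omega)
    · exact hr
    · exact absurd h2 (by rw [hr.2]; omega)
  have hnr : ¬ D.IsRetic (D.tail x.1) := fun hr => hr.not_treeNode htn
  have hnr2 : ¬ D.IsRetic (D.tail y.1) := by rw [← ht']; exact hnr
  refine ⟨x.1, y.1, hne, ht'.symm, hh', htn, ?_⟩
  rw [hs, ← barc_eq_bar hnr, ← barc_eq_bar hnr2]

lemma rc_struct (hsb : D.IsSemiBinary) {σ : Finset D.BArc}
    (h : D.Bulged.IsRCShape (fun v => D.IsTreeNode v) (fun v => D.IsRetic v) σ) :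
    ∃ (m : A) (bot : D.BArc), D.IsRetic (D.head m) ∧ D.IsTreeNode (D.tail m) ∧
      bot.1 = D.outArc (D.head m) ∧ σ = {bot, D.bar m, D.bar (D.sib m)} := by
  obtain ⟨mid, bot, top, hbm, hbt, hmt, hs, hhd, htl, hrt, htn⟩ := h
  have hhd' : D.head mid.1 = D.tail bot.1 := hhd
  have htl' : D.tail mid.1 = D.tail top.1 := htl
  have hrt' : D.IsRetic (D.tail bot.1) := hrt
  have htn' : D.IsTreeNode (D.tail mid.1) := htn
  have hmbar : mid = D.bar mid.1 := barc_eq_bar (fun hr => hr.not_treeNode htn')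
  have htn2 : D.IsTreeNode (D.tail top.1) := by rw [← htl']; exact htn'
  have htbar : top = D.bar top.1 := barc_eq_bar (fun hr => hr.not_treeNode htn2)
  have hretv : D.IsRetic (D.head mid.1) := by rw [hhd']; exact hrt'
  have hbot1 : bot.1 = D.outArc (D.head mid.1) := by
    rw [hhd']; exact outArc_eq_retic hrt' rfl
  have hs2 : D.outdeg (D.tail mid.1) = 2 := tn_outdeg_two hsb htn'
  have htop1 : top.1 = D.sib mid.1 := by
    rcases sib_cases hs2 htl'.symm with h1 | h1
    · exact absurd (barc_eq_of_not_retic (fun hr => hr.not_treeNode htn2) h1).symm hmt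
    · exact h1
  refine ⟨mid.1, bot, hretv, htn', hbot1, ?_⟩
  rw [hs, ← hmbar, ← htop1, ← htbar]

lemma midIn_rc (hsb : D.IsSemiBinary) {m : A} {bot : D.BArc} (hm : D.IsRetic (D.head m))
    (ht : D.IsTreeNode (D.tail m)) (hb : bot.1 = D.outArc (D.head m))
    {σ : Finset D.BArc} (hσ : σ = {bot, D.bar m, D.bar (D.sib m)}) (a : A) :
    D.MidIn a (D.proj σ) ↔ a = m := by
  have hac := hsb.1.1
  have hnp := hsb.1.2.1
  have hs2 : D.outdeg (D.tail m) = 2 := tn_outdeg_two hsb ht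
  have hsib := sib_spec hs2
  have hov : D.tail (D.outArc (D.head m)) = D.head m := outArc_tail_retic hm
  have hproj : D.proj σ = {D.outArc (D.head m), m, D.sib m} := by
    rw [hσ, proj_triple, hb]; rfl
  constructor
  · rintro ⟨ha, b, hbmem, hbrt, hab⟩
    rw [hproj] at ha hbmem
    simp only [Finset.mem_insert, Finset.mem_singleton] at ha hbmem
    have hbv : b = D.outArc (D.head m) := by
      rcases hbmem with h1 | h1 | h1
      · exact h1
      · exact absurd hbrt (by rw [h1]; exact fun hr => hr.not_treeNode ht)
      · exact absurd hbrt (by rw [h1, hsib.1]; exact fun hr => hr.not_treeNode ht)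
    rw [hbv, hov] at hab
    rcases ha with h1 | h1 | h1
    · exact absurd (hov.trans (h1 ▸ hab).symm) (tail_ne_head hac (D.outArc (D.head m)))
    · exact h1
    · exfalso
      rw [h1] at hab
      have : D.sib m = m := hnp _ _ hsib.1 (by rw [hab])
      exact hsib.2 this
  · rintro rfl
    rw [hproj]
    exact ⟨by simp, D.outArc (D.head a), by simp, by rw [hov]; exact hm, hov.symm⟩

lemma midIn_cherry {e f : A} (hef : D.tail f = D.tail e)
    (htn : D.IsTreeNode (D.tail e)) {σ : Finset D.BArc}
    (hσ : σ = {D.bar e, D.bar f}) (a : A) : ¬ D.MidIn a (D.proj σ) := by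
  rintro ⟨ha, b, hbmem, hbrt, hab⟩
  rw [hσ, proj_pair] at hbmem
  simp only [bar_fst, Finset.mem_insert, Finset.mem_singleton] at hbmem
  rcases hbmem with h1 | h1
  · rw [h1] at hbrt; exact hbrt.not_treeNode htn
  · rw [h1, hef] at hbrt; exact hbrt.not_treeNode htn


/-! ### Cover-level lemmas -/

def PMid (D : MGraph V A) (P : Finset (Finset D.BArc)) (m : A) : Prop :=
  ∃ σ ∈ P, D.MidIn m (D.proj σ)

lemma mem_suppOf_iff {P : Finset (Finset D.BArc)} {a : A} :
    a ∈ D.suppOf (D.coverClass P) ↔ ¬ D.PMid P a := by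
  unfold suppOf PMid coverClass
  simp only [Set.mem_setOf_eq, Multiset.mem_map, Finset.mem_val]
  constructor
  · rintro h ⟨σ, hσ, hm⟩; exact h _ ⟨σ, hσ, rfl⟩ hm
  · rintro h s ⟨σ, hσ, rfl⟩ hm; exact h ⟨σ, hσ, hm⟩

lemma cover_unique {P : Finset (Finset D.BArc)} (hP : D.IsBulgedCherryCover P)
    {x : D.BArc} (hnr : ¬ D.IsRootArc x.1) {σ σ' : Finset D.BArc}
    (h1 : σ ∈ P ∧ x ∈ σ) (h2 : σ' ∈ P ∧ x ∈ σ') : σ = σ' := by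
  obtain ⟨s, _, hu⟩ := hP.2.1 x hnr
  rw [hu _ h1, hu _ h2]

lemma mid_data (hsb : D.IsSemiBinary) {P : Finset (Finset D.BArc)}
    (hP : D.IsBulgedCherryCover P) {σ : Finset D.BArc} (hσ : σ ∈ P) {m : A}
    (h : D.MidIn m (D.proj σ)) :
    D.IsRetic (D.head m) ∧ D.IsTreeNode (D.tail m) ∧
      ∃ bot : D.BArc, bot.1 = D.outArc (D.head m) ∧
        σ = {bot, D.bar m, D.bar (D.sib m)} ∧ (∀ a, D.MidIn a (D.proj σ) ↔ a = m) := by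
  rcases hP.1 σ hσ with hc | hrc
  · obtain ⟨e, f, _, hef, _, htn, hs⟩ := cherry_struct hsb hc
    exact absurd h (midIn_cherry hef htn hs m)
  · obtain ⟨m₀, bot, hm₀, ht₀, hb₀, hs₀⟩ := rc_struct hsb hrc
    have hiff := fun a => midIn_rc hsb hm₀ ht₀ hb₀ hs₀ a
    have hm : m = m₀ := (hiff m).1 h
    subst hm
    exact ⟨hm₀, ht₀, bot, hb₀, hs₀, hiff⟩

instance : Nonempty D.BArc := ⟨D.bar (Classical.arbitrary A)⟩

noncomputable def shapeOf (D : MGraph V A) (P : Finset (Finset D.BArc)) (m : A) :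
    Finset D.BArc :=
  Classical.epsilon (fun σ => σ ∈ P ∧ D.MidIn m (D.proj σ))

noncomputable def botOfShape (D : MGraph V A) [Nonempty A] (σ : Finset D.BArc) : D.BArc :=
  Classical.epsilon (fun x => x ∈ σ ∧ D.IsRetic (D.tail x.1))

lemma bot_unique {m : A} {bot x : D.BArc} (hm : D.IsRetic (D.head m))
    (ht : D.IsTreeNode (D.tail m)) (hb : bot.1 = D.outArc (D.head m))
    (hs2 : D.outdeg (D.tail m) = 2)
    (hx : x ∈ ({bot, D.bar m, D.bar (D.sib m)} : Finset D.BArc))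
    (hxr : D.IsRetic (D.tail x.1)) : x = bot := by
  simp only [Finset.mem_insert, Finset.mem_singleton] at hx
  rcases hx with h | h | h
  · exact h
  · rw [h] at hxr; exact absurd hxr (fun hr => hr.not_treeNode ht)
  · rw [h] at hxr
    have : D.tail (D.sib m) = D.tail m := (sib_spec hs2).1
    rw [bar_fst, this] at hxr
    exact absurd hxr (fun hr => hr.not_treeNode ht)

lemma mid_shape_data (hsb : D.IsSemiBinary) {P : Finset (Finset D.BArc)}
    (hP : D.IsBulgedCherryCover P) {m : A} (hm : D.PMid P m) :
    D.IsRetic (D.head m) ∧ D.IsTreeNode (D.tail m) ∧ D.shapeOf P m ∈ P ∧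
      (D.botOfShape (D.shapeOf P m)).1 = D.outArc (D.head m) ∧
      D.shapeOf P m = {D.botOfShape (D.shapeOf P m), D.bar m, D.bar (D.sib m)} ∧
      (∀ a, D.MidIn a (D.proj (D.shapeOf P m)) ↔ a = m) ∧
      D.botOfShape (D.shapeOf P m) ∈ D.shapeOf P m := by
  have hspec : D.shapeOf P m ∈ P ∧ D.MidIn m (D.proj (D.shapeOf P m)) :=
    Classical.epsilon_spec hm
  obtain ⟨h1, h2, bot, hb, hs, hiff⟩ := mid_data hsb hP hspec.1 hspec.2
  have hbret : D.IsRetic (D.tail bot.1) := by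
    rw [hb, outArc_tail_retic h1]; exact h1
  have hex : ∃ x : D.BArc, x ∈ D.shapeOf P m ∧ D.IsRetic (D.tail x.1) :=
    ⟨bot, by rw [hs]; simp, hbret⟩
  have hbspec : D.botOfShape (D.shapeOf P m) ∈ D.shapeOf P m ∧
      D.IsRetic (D.tail (D.botOfShape (D.shapeOf P m)).1) :=
    Classical.epsilon_spec hex
  have hbeq : D.botOfShape (D.shapeOf P m) = bot :=
    bot_unique h1 h2 hb (tn_outdeg_two hsb h2) (by rw [← hs]; exact hbspec.1) hbspec.2
  rw [hbeq]
  exact ⟨h1, h2, hspec.1, hb, hs, hiff, hbeq ▸ hbspec.1⟩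

lemma PMid.retic_head (hsb : D.IsSemiBinary) {P : Finset (Finset D.BArc)}
    (hP : D.IsBulgedCherryCover P) {m : A} (hm : D.PMid P m) : D.IsRetic (D.head m) :=
  (mid_shape_data hsb hP hm).1

lemma PMid.tn_tail (hsb : D.IsSemiBinary) {P : Finset (Finset D.BArc)}
    (hP : D.IsBulgedCherryCover P) {m : A} (hm : D.PMid P m) : D.IsTreeNode (D.tail m) :=
  (mid_shape_data hsb hP hm).2.1

/-! ### Counting -/

noncomputable def inArcs (D : MGraph V A) (v : V) : Finset A :=
  Finset.univ.filter (fun a => D.head a = v)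

lemma mem_inArcs {v : V} {a : A} : a ∈ D.inArcs v ↔ D.head a = v := by
  simp [inArcs]

lemma card_inArcs (v : V) : (D.inArcs v).card = D.indeg v := by
  simp [inArcs, indeg, Fintype.card_subtype]

noncomputable def copyArcs (D : MGraph V A) (v : V) : Finset D.BArc :=
  Finset.univ.filter (fun x => D.tail x.1 = v)

lemma mem_copyArcs {v : V} {x : D.BArc} : x ∈ D.copyArcs v ↔ D.tail x.1 = v := by
  simp [copyArcs]

lemma card_copyArcs {v : V} (hv : D.IsRetic v) :
    (D.copyArcs v).card = D.indeg v - 1 := by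
  have himg : D.copyArcs v =
      (Finset.univ : Finset (Fin (D.bulgeMult (D.outArc v)))).image
        (fun i => (⟨D.outArc v, i⟩ : D.BArc)) := by
    ext x
    simp only [mem_copyArcs, Finset.mem_image, Finset.mem_univ, true_and]
    constructor
    · intro hx
      have h1 : x.1 = D.outArc v := outArc_eq_retic hv hx
      rcases x with ⟨a, j⟩
      dsimp at h1; subst h1
      exact ⟨j, rfl⟩
    · rintro ⟨i, rfl⟩
      exact outArc_tail_retic hv
  rw [himg, Finset.card_image_of_injective _ sigma_mk_injective,
    Finset.card_univ, Fintype.card_fin, bulgeMult_outArc hv]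

lemma card_mids (hsb : D.IsSemiBinary) {P : Finset (Finset D.BArc)}
    (hP : D.IsBulgedCherryCover P) {v : V} (hv : D.IsRetic v) :
    ((D.inArcs v).filter (fun m => D.PMid P m)).card = D.indeg v - 1 := by
  rw [← card_copyArcs hv]
  apply Finset.card_bij (fun m _ => D.botOfShape (D.shapeOf P m))
  · intro m hm
    rw [Finset.mem_filter, mem_inArcs] at hm
    obtain ⟨h1, h2, _, hb, _, _, _⟩ := mid_shape_data hsb hP hm.2
    rw [mem_copyArcs, hb, outArc_tail_retic h1, hm.1]
  · intro m hm m' hm' heq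
    rw [Finset.mem_filter, mem_inArcs] at hm hm'
    obtain ⟨h1, h2, hσP, hb, hs, hiff, hbmem⟩ := mid_shape_data hsb hP hm.2
    obtain ⟨h1', h2', hσP', hb', hs', hiff', hbmem'⟩ := mid_shape_data hsb hP hm'.2
    have hnr : ¬ D.IsRootArc (D.botOfShape (D.shapeOf P m)).1 := by
      intro hr
      have : D.IsRetic (D.tail (D.botOfShape (D.shapeOf P m)).1) := by
        rw [hb, outArc_tail_retic h1]; exact h1
      exact this.not_root hr
    have hσeq : D.shapeOf P m = D.shapeOf P m' :=
      cover_unique hP hnr ⟨hσP, hbmem⟩ ⟨hσP', by rw [heq]; exact hbmem'⟩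
    have : D.MidIn m' (D.proj (D.shapeOf P m)) := by
      rw [hσeq]; exact (hiff' m').2 rfl
    exact ((hiff m').1 this).symm
  · intro x hx
    rw [mem_copyArcs] at hx
    have hxr : D.IsRetic (D.tail x.1) := by rw [hx]; exact hv
    have hnr : ¬ D.IsRootArc x.1 := fun hr => hxr.not_root hr
    obtain ⟨σ, ⟨hσP, hxσ⟩, _⟩ := hP.2.1 x hnr
    rcases hP.1 σ hσP with hc | hrc
    · exfalso
      obtain ⟨e, f, _, hef, _, htn, hs⟩ := cherry_struct hsb hc
      rw [hs] at hxσ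
      simp only [Finset.mem_insert, Finset.mem_singleton] at hxσ
      rcases hxσ with h | h
      · rw [h, bar_fst] at hxr; exact hxr.not_treeNode htn
      · rw [h, bar_fst, hef] at hxr; exact hxr.not_treeNode htn
    · obtain ⟨m, bot, hm₀, ht₀, hb₀, hs₀⟩ := rc_struct hsb hrc
      have hmid : D.MidIn m (D.proj σ) := (midIn_rc hsb hm₀ ht₀ hb₀ hs₀ m).2 rfl
      have hpm : D.PMid P m := ⟨σ, hσP, hmid⟩
      have hxbot : x = bot :=
        bot_unique hm₀ ht₀ hb₀ (tn_outdeg_two hsb ht₀) (by rw [← hs₀]; exact hxσ) hxr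
      have hhead : D.head m = v := by
        rw [← hx, hxbot, hb₀, outArc_tail_retic hm₀]
      refine ⟨m, by rw [Finset.mem_filter, mem_inArcs]; exact ⟨hhead, hpm⟩, ?_⟩
      obtain ⟨h1, h2, hσP', hb', hs', hiff', hbmem'⟩ := mid_shape_data hsb hP hpm
      have hmmem : D.bar m ∈ D.shapeOf P m := by
        rw [hs']; simp
      have hnr' : ¬ D.IsRootArc (D.bar m).1 := by
        intro hr; exact h2.not_root hr
      have hσeq : D.shapeOf P m = σ :=
        cover_unique hP hnr' ⟨hσP', hmmem⟩ ⟨hσP, by rw [hs₀]; simp⟩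
      rw [← hσeq] at hs₀
      have : D.botOfShape (D.shapeOf P m) ∈
          ({bot, D.bar m, D.bar (D.sib m)} : Finset D.BArc) := by
        rw [← hs₀]; exact hbmem'
      have hbb : D.botOfShape (D.shapeOf P m) = bot := by
        rcases Finset.mem_insert.1 this with h | h
        · exact h
        · exfalso
          have hrb : D.IsRetic (D.tail (D.botOfShape (D.shapeOf P m)).1) := by
            rw [hb', outArc_tail_retic h1]; exact h1
          simp only [Finset.mem_insert, Finset.mem_singleton] at h
          rcases h with h | h
          · rw [h, bar_fst] at hrb; exact hrb.not_treeNode h2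
          · rw [h, bar_fst, (sib_spec (tn_outdeg_two hsb h2)).1] at hrb
            exact hrb.not_treeNode h2
      rw [hbb, hxbot]

lemma exists_unique_nonmid (hsb : D.IsSemiBinary) {P : Finset (Finset D.BArc)}
    (hP : D.IsBulgedCherryCover P) {v : V} (hv : D.IsRetic v) :
    ∃! a : A, (D.head a = v ∧ ¬ D.PMid P a) := by
  have hcard := card_mids hsb hP hv
  have htot : ((D.inArcs v).filter (fun m => D.PMid P m)).card +
      ((D.inArcs v).filter (fun m => ¬ D.PMid P m)).card = (D.inArcs v).card :=
    Finset.card_filter_add_card_filter_not _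
  rw [card_inArcs, hcard] at htot
  have h2 : 2 ≤ D.indeg v := hv.1
  have h1 : ((D.inArcs v).filter (fun m => ¬ D.PMid P m)).card = 1 := by omega
  obtain ⟨a, ha⟩ := Finset.card_eq_one.1 h1
  have hmem : ∀ b : A, b ∈ (D.inArcs v).filter (fun m => ¬ D.PMid P m) ↔ b = a := by
    intro b; rw [ha, Finset.mem_singleton]
  have haprop := (hmem a).2 rfl
  rw [Finset.mem_filter, mem_inArcs] at haprop
  refine ⟨a, ⟨haprop.1, haprop.2⟩, fun b hb => ?_⟩
  have : b ∈ (D.inArcs v).filter (fun m => ¬ D.PMid P m) := by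
    rw [Finset.mem_filter, mem_inArcs]; exact hb
  exact (hmem b).1 this


/-! ### The support tree of a cover -/

lemma suppOf_isSupportTree (hsb : D.IsSemiBinary) {P : Finset (Finset D.BArc)}
    (hP : D.IsBulgedCherryCover P) :
    D.IsSupportTree (D.suppOf (D.coverClass P)) := by
  refine ⟨?_, ?_, ?_⟩
  · intro a hna
    rw [mem_suppOf_iff]
    intro hpm; exact hna (hpm.retic_head hsb hP)
  · intro v hv
    obtain ⟨a, ⟨ha1, ha2⟩, hau⟩ := exists_unique_nonmid hsb hP hv
    refine ⟨a, ⟨mem_suppOf_iff.2 ha2, ha1⟩, ?_⟩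
    rintro b ⟨hb1, hb2⟩; exact hau b ⟨hb2, mem_suppOf_iff.1 hb1⟩
  · intro v hvl
    rcases hsb.1.2.2.2 v with hr | hr | hr | hr
    · obtain ⟨a, ha⟩ := exists_tail_of_outdeg_pos (le_of_eq hr.2.symm)
      refine ⟨a, mem_suppOf_iff.2 ?_, ha⟩
      intro hpm
      exact (hpm.tn_tail hsb hP).not_root (by rw [ha]; exact hr)
    · exact absurd hr hvl
    · have hs2v : D.outdeg v = 2 := tn_outdeg_two hsb hr
      obtain ⟨e, he⟩ := exists_tail_of_outdeg_pos (by rw [hs2v]; omega)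
      have hs2 : D.outdeg (D.tail e) = 2 := by rw [he]; exact hs2v
      have hsib := sib_spec hs2
      by_cases hpe : D.PMid P e
      · refine ⟨D.sib e, mem_suppOf_iff.2 ?_, by rw [hsib.1, he]⟩
        intro hps
        obtain ⟨h1, h2, hσP, hb, hs, hiff, hbmem⟩ := mid_shape_data hsb hP hpe
        obtain ⟨h1', h2', hσP', hb', hs', hiff', hbmem'⟩ := mid_shape_data hsb hP hps
        have hnr : ¬ D.IsRootArc (D.bar (D.sib e)).1 := by
          intro hrr
          exact (IsTreeNode.not_root (by rw [bar_fst, hsib.1]; exact h2)) hrr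
        have hmem1 : D.bar (D.sib e) ∈ D.shapeOf P e := by rw [hs]; simp
        have hmem2 : D.bar (D.sib e) ∈ D.shapeOf P (D.sib e) := by rw [hs']; simp
        have hσeq : D.shapeOf P e = D.shapeOf P (D.sib e) :=
          cover_unique hP hnr ⟨hσP, hmem1⟩ ⟨hσP', hmem2⟩
        have : D.MidIn (D.sib e) (D.proj (D.shapeOf P e)) := by
          rw [hσeq]; exact (hiff' _).2 rfl
        exact hsib.2 ((hiff _).1 this)
      · exact ⟨e, mem_suppOf_iff.2 hpe, he⟩
    · refine ⟨D.outArc v, mem_suppOf_iff.2 ?_, outArc_tail_retic hr⟩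
      intro hpm
      have := hpm.tn_tail hsb hP
      rw [outArc_tail_retic hr] at this
      exact hr.not_treeNode this

/-! ### Canonical projected cover -/

noncomputable def midsF (D : MGraph V A) (S : Set A) : Finset A :=
  Finset.univ.filter (fun m => D.IsRetic (D.head m) ∧ m ∉ S)

noncomputable def cherryF (D : MGraph V A) [Nonempty A] (S : Set A) : Finset V :=
  Finset.univ.filter
    (fun t => D.IsTreeNode t ∧ D.outArc t ∈ S ∧ D.sib (D.outArc t) ∈ S)

noncomputable def canonP (D : MGraph V A) [Nonempty A] (S : Set A) : Finset (Finset A) :=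
  ((D.midsF S).image (fun m => {D.outArc (D.head m), m, D.sib m})) ∪
    ((D.cherryF S).image (fun t => {D.outArc t, D.sib (D.outArc t)}))

lemma mem_midsF {S : Set A} {m : A} :
    m ∈ D.midsF S ↔ D.IsRetic (D.head m) ∧ m ∉ S := by simp [midsF]

lemma mem_cherryF {S : Set A} {t : V} :
    t ∈ D.cherryF S ↔ D.IsTreeNode t ∧ D.outArc t ∈ S ∧ D.sib (D.outArc t) ∈ S := by
  simp [cherryF]

/-! ### Structure of shapes in a cover -/

lemma cherry_shape_data (hsb : D.IsSemiBinary) {P : Finset (Finset D.BArc)}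
    (hP : D.IsBulgedCherryCover P) {σ : Finset D.BArc} (hσ : σ ∈ P)
    (hc : D.Bulged.IsCherryShape σ) :
    ∃ e, D.IsTreeNode (D.tail e) ∧ σ = {D.bar e, D.bar (D.sib e)} ∧
      ¬ D.PMid P e ∧ ¬ D.PMid P (D.sib e) ∧ D.proj σ = {e, D.sib e} := by
  obtain ⟨e, f, hne, hef, hh, htn, hs⟩ := cherry_struct hsb hc
  have hs2 : D.outdeg (D.tail e) = 2 := tn_outdeg_two hsb htn
  have hfs : f = D.sib e := by
    rcases sib_cases hs2 hef with h | h
    · exact absurd h.symm hne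
    · exact h
  subst hfs
  have hnomid : ∀ a, ¬ D.MidIn a (D.proj σ) := midIn_cherry hef htn hs
  have key : ∀ x : D.BArc, x ∈ σ → ¬ D.IsRootArc x.1 → ∀ m, ¬ (D.PMid P m ∧ D.bar m = x ∨
      D.PMid P m ∧ D.bar (D.sib m) = x) := by
    intro x hx hnr m hcase
    have hpm : D.PMid P m := by rcases hcase with ⟨h, _⟩ | ⟨h, _⟩ <;> exact h
    obtain ⟨h1, h2, hσP, hb, hs', hiff, hbmem⟩ := mid_shape_data hsb hP hpm
    have hxmem : x ∈ D.shapeOf P m := by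
      rw [hs']
      rcases hcase with ⟨_, h⟩ | ⟨_, h⟩ <;> rw [← h] <;> simp
    have hσeq : σ = D.shapeOf P m := cover_unique hP hnr ⟨hσ, hx⟩ ⟨hσP, hxmem⟩
    have : D.MidIn m (D.proj σ) := by rw [hσeq]; exact (hiff m).2 rfl
    exact hnomid m this
  have hnre : ¬ D.IsRootArc (D.bar e).1 := by
    intro hrr; exact htn.not_root hrr
  have hnrs : ¬ D.IsRootArc (D.bar (D.sib e)).1 := by
    intro hrr
    exact (IsTreeNode.not_root (by rw [bar_fst, hef]; exact htn)) hrr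
  refine ⟨e, htn, hs, ?_, ?_, by rw [hs, proj_pair]; rfl⟩
  · intro hpe
    exact key (D.bar e) (by rw [hs]; simp) hnre e (Or.inl ⟨hpe, rfl⟩)
  · intro hps
    exact key (D.bar (D.sib e)) (by rw [hs]; simp) hnrs (D.sib e) (Or.inl ⟨hps, rfl⟩)

lemma rc_shape_data (hsb : D.IsSemiBinary) {P : Finset (Finset D.BArc)}
    (hP : D.IsBulgedCherryCover P) {σ : Finset D.BArc} (hσ : σ ∈ P)
    (hrc : D.Bulged.IsRCShape (fun v => D.IsTreeNode v) (fun v => D.IsRetic v) σ) :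
    ∃ m, D.PMid P m ∧ σ = D.shapeOf P m ∧
      D.proj σ = {D.outArc (D.head m), m, D.sib m} ∧
      (∀ a, D.MidIn a (D.proj σ) ↔ a = m) := by
  obtain ⟨m, bot, hm, ht, hb, hs⟩ := rc_struct hsb hrc
  have hiff := fun a => midIn_rc hsb hm ht hb hs a
  have hpm : D.PMid P m := ⟨σ, hσ, (hiff m).2 rfl⟩
  obtain ⟨h1, h2, hσP, hb', hs', hiff', hbmem⟩ := mid_shape_data hsb hP hpm
  have hnr : ¬ D.IsRootArc (D.bar m).1 := by intro hrr; exact ht.not_root hrr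
  have hσeq : σ = D.shapeOf P m :=
    cover_unique hP hnr ⟨hσ, by rw [hs]; simp⟩ ⟨hσP, by rw [hs']; simp⟩
  refine ⟨m, hpm, hσeq, ?_, hiff⟩
  rw [hs, proj_triple, hb]; rfl


/-! ### The cover class is determined by the support tree -/

lemma coverClass_eq_canon (hsb : D.IsSemiBinary) {P : Finset (Finset D.BArc)}
    (hP : D.IsBulgedCherryCover P) :
    D.coverClass P = (D.canonP (D.suppOf (D.coverClass P))).val := by
  set S := D.suppOf (D.coverClass P) with hS
  have hclass : D.coverClass P = P.val.map D.proj := rfl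
  have hdecomp : ∀ σ ∈ P,
      (∃ e, D.IsTreeNode (D.tail e) ∧ σ = {D.bar e, D.bar (D.sib e)} ∧ ¬ D.PMid P e ∧
        ¬ D.PMid P (D.sib e) ∧ D.proj σ = {e, D.sib e}) ∨
      (∃ m, D.PMid P m ∧ σ = D.shapeOf P m ∧
        D.proj σ = {D.outArc (D.head m), m, D.sib m} ∧
        (∀ a, D.MidIn a (D.proj σ) ↔ a = m)) := by
    intro σ hσ
    rcases hP.1 σ hσ with hc | hrc
    · exact Or.inl (cherry_shape_data hsb hP hσ hc)
    · exact Or.inr (rc_shape_data hsb hP hσ hrc)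
  have hinj : ∀ σ ∈ P.val, ∀ σ' ∈ P.val, D.proj σ = D.proj σ' → σ = σ' := by
    intro σ hσ σ' hσ' hpp
    rw [Finset.mem_val] at hσ hσ'
    rcases hdecomp σ hσ with ⟨e, hte, hse, _, _, hproje⟩ | ⟨m, hpm, hσm, _, hiffm⟩
    · rcases hdecomp σ' hσ' with ⟨e', hte', hse', _, _, hproje'⟩ | ⟨m', _, _, _, hiffm'⟩
      · have hmem : e' ∈ ({e, D.sib e} : Finset A) := by
          rw [← hproje, hpp, hproje']; simp
        have hs2 : D.outdeg (D.tail e) = 2 := tn_outdeg_two hsb hte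
        simp only [Finset.mem_insert, Finset.mem_singleton] at hmem
        rcases hmem with h | h
        · rw [hse, hse', h]
        · rw [hse, hse', h, sib_sib hs2, Finset.pair_comm]
      · exfalso
        have hmid : D.MidIn m' (D.proj σ) := by rw [hpp]; exact (hiffm' m').2 rfl
        exact midIn_cherry (sib_spec (tn_outdeg_two hsb hte)).1 hte hse m' hmid
    · rcases hdecomp σ' hσ' with ⟨e', hte', hse', _, _, hproje'⟩ | ⟨m', _, hσm', _, hiffm'⟩
      · exfalso
        have hmid : D.MidIn m (D.proj σ') := by rw [← hpp]; exact (hiffm m).2 rfl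
        exact midIn_cherry (sib_spec (tn_outdeg_two hsb hte')).1 hte' hse' m hmid
      · have hmm : D.MidIn m (D.proj σ') := by rw [← hpp]; exact (hiffm m).2 rfl
        have hm' : m = m' := (hiffm' m).1 hmm
        rw [hσm, hσm', hm']
  have hnd1 : (P.val.map D.proj).Nodup := Multiset.Nodup.map_on hinj P.nodup
  rw [hclass]
  rw [Multiset.Nodup.ext hnd1 (D.canonP S).nodup]
  intro s
  rw [Multiset.mem_map, Finset.mem_val]
  constructor
  · rintro ⟨σ, hσv, rfl⟩
    rw [Finset.mem_val] at hσv
    unfold canonP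
    rw [Finset.mem_union, Finset.mem_image, Finset.mem_image]
    rcases hdecomp σ hσv with ⟨e, hte, hse, hpe, hpse, hproje⟩ | ⟨m, hpm, _, hprojm, _⟩
    · right
      have hext : ∃ a, D.tail a = D.tail e := ⟨e, rfl⟩
      have hot : D.tail (D.outArc (D.tail e)) = D.tail e := outArc_tail hext
      have hs2 : D.outdeg (D.tail e) = 2 := tn_outdeg_two hsb hte
      refine ⟨D.tail e, ?_, ?_⟩
      · rw [mem_cherryF]
        rcases sib_cases hs2 hot with h | h
        · rw [h]
          exact ⟨hte, mem_suppOf_iff.2 hpe, mem_suppOf_iff.2 hpse⟩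
        · rw [h, sib_sib hs2]
          exact ⟨hte, mem_suppOf_iff.2 hpse, mem_suppOf_iff.2 hpe⟩
      · rcases sib_cases hs2 hot with h | h
        · rw [h, hproje]
        · rw [h, sib_sib hs2, hproje, Finset.pair_comm]
    · left
      refine ⟨m, ?_, hprojm.symm⟩
      rw [mem_midsF]
      exact ⟨hpm.retic_head hsb hP, fun hms => (mem_suppOf_iff.1 hms) hpm⟩
  · intro hs
    unfold canonP at hs
    rw [Finset.mem_union, Finset.mem_image, Finset.mem_image] at hs
    rcases hs with ⟨m, hm, rfl⟩ | ⟨t, ht, rfl⟩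
    · rw [mem_midsF] at hm
      have hpm : D.PMid P m := by
        by_contra hnp
        exact hm.2 (mem_suppOf_iff.2 hnp)
      obtain ⟨h1, h2, hσP, hb', hs', _, _⟩ := mid_shape_data hsb hP hpm
      refine ⟨D.shapeOf P m, by rw [Finset.mem_val]; exact hσP, ?_⟩
      rw [hs', proj_triple, hb']; rfl
    · rw [mem_cherryF] at ht
      obtain ⟨htn, heS, hsS⟩ := ht
      have hnpe : ¬ D.PMid P (D.outArc t) := mem_suppOf_iff.1 heS
      have hnps : ¬ D.PMid P (D.sib (D.outArc t)) := mem_suppOf_iff.1 hsS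
      have hext : ∃ a, D.tail a = t :=
        exists_tail_of_outdeg_pos (by rw [tn_outdeg_two hsb htn]; omega)
      have hot : D.tail (D.outArc t) = t := outArc_tail hext
      have htne : D.IsTreeNode (D.tail (D.outArc t)) := by rw [hot]; exact htn
      have hnr : ¬ D.IsRootArc (D.bar (D.outArc t)).1 := by
        intro hrr; exact htne.not_root hrr
      obtain ⟨σ, ⟨hσP, hbe⟩, _⟩ := hP.2.1 (D.bar (D.outArc t)) hnr
      rcases hdecomp σ hσP with ⟨e', hte', hse', _, _, hproje'⟩ | ⟨m, hpm, hσm, _, _⟩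
      · have hs2' : D.outdeg (D.tail e') = 2 := tn_outdeg_two hsb hte'
        rw [hse'] at hbe
        simp only [Finset.mem_insert, Finset.mem_singleton] at hbe
        refine ⟨σ, by rw [Finset.mem_val]; exact hσP, ?_⟩
        rcases hbe with h | h
        · have : D.outArc t = e' := by
            have := congrArg Sigma.fst h; simpa using this
          rw [hproje', ← this]
        · have hsa : D.outArc t = D.sib e' := by
            have := congrArg Sigma.fst h; simpa using this
          have h1 : D.sib (D.outArc t) = e' := by rw [hsa, sib_sib hs2']
          have h2 : ({D.outArc t, D.sib (D.outArc t)} : Finset A) = {D.sib e', e'} := by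
            rw [h1, ← hsa]
          rw [hproje', h2, Finset.pair_comm]
      · exfalso
        obtain ⟨h1, h2, _, hb', hs', _, _⟩ := mid_shape_data hsb hP hpm
        rw [hσm, hs'] at hbe
        simp only [Finset.mem_insert, Finset.mem_singleton] at hbe
        rcases hbe with h | h | h
        · have hfst : D.outArc t = (D.botOfShape (D.shapeOf P m)).1 := by
            have := congrArg Sigma.fst h; simpa using this
          have h3 : t = D.head m := by
            rw [← hot, hfst, hb', outArc_tail_retic h1]
          rw [h3] at htn
          exact h1.not_treeNode htn
        · have hfst : D.outArc t = m := by
            have := congrArg Sigma.fst h; simpa using this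
          exact hnpe (hfst ▸ hpm)
        · have hfst : D.outArc t = D.sib m := by
            have := congrArg Sigma.fst h; simpa using this
          have h4 : D.sib (D.outArc t) = m := by
            rw [hfst, sib_sib (tn_outdeg_two hsb h2)]
          exact hnps (h4.symm ▸ hpm)


/-! ### Building a cover from a support tree -/

noncomputable def botOf (D : MGraph V A) [Nonempty A] (S : Set A) (m : A) : D.BArc :=
  if h : ((D.inArcs (D.head m)).filter (fun a => a ∉ S)).card
        = D.bulgeMult (D.outArc (D.head m)) ∧
      m ∈ (D.inArcs (D.head m)).filter (fun a => a ∉ S) then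
    ⟨D.outArc (D.head m),
      Fin.cast h.1 (((D.inArcs (D.head m)).filter (fun a => a ∉ S)).equivFin ⟨m, h.2⟩)⟩
  else D.bar (D.outArc (D.head m))

@[simp] lemma botOf_fst (S : Set A) (m : A) : (D.botOf S m).1 = D.outArc (D.head m) := by
  unfold botOf; split_ifs <;> rfl

lemma card_nonchosen {S : Set A} (hsupp : D.IsSupportTree S) {v : V} (hv : D.IsRetic v) :
    ((D.inArcs v).filter (fun a => a ∉ S)).card = D.bulgeMult (D.outArc v) := by
  obtain ⟨c, ⟨hcS, hcv⟩, hcu⟩ := hsupp.2.1 v hv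
  have hone : (D.inArcs v).filter (fun a => a ∈ S) = {c} := by
    ext b
    rw [Finset.mem_filter, mem_inArcs, Finset.mem_singleton]
    constructor
    · rintro ⟨h1, h2⟩; exact hcu b ⟨h2, h1⟩
    · rintro rfl; exact ⟨hcv, hcS⟩
  have htot : ((D.inArcs v).filter (fun a => a ∈ S)).card +
      ((D.inArcs v).filter (fun a => ¬ a ∈ S)).card = (D.inArcs v).card :=
    Finset.card_filter_add_card_filter_not _
  rw [hone, Finset.card_singleton, card_inArcs] at htot
  rw [bulgeMult_outArc hv]
  have h2 : 2 ≤ D.indeg v := hv.1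
  omega

lemma nonchosen_props (hsb : D.IsSemiBinary) {S : Set A} (hsupp : D.IsSupportTree S)
    {m : A} (hm : m ∉ S) : D.IsRetic (D.head m) ∧ D.IsTreeNode (D.tail m) := by
  have hret : D.IsRetic (D.head m) := by
    by_contra h; exact hm (hsupp.1 m h)
  refine ⟨hret, ?_⟩
  rcases tail_cases hsb m with h | h | h
  · exfalso
    have hnl : ¬ D.IsLeaf (D.tail m) := by
      intro hl; have := h.1; have := hl.1; omega
    obtain ⟨a, haS, hat⟩ := hsupp.2.2 _ hnl
    have : a = m := tail_eq_of_outdeg_one h.2 hat rfl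
    exact hm (this ▸ haS)
  · exact h
  · exfalso
    have hnl : ¬ D.IsLeaf (D.tail m) := by
      intro hl; have := h.2; have := hl.2; omega
    obtain ⟨a, haS, hat⟩ := hsupp.2.2 _ hnl
    have : a = m := tail_eq_of_outdeg_one h.2 hat rfl
    exact hm (this ▸ haS)

lemma some_out_in_S (hsb : D.IsSemiBinary) {S : Set A} (hsupp : D.IsSupportTree S)
    {e : A} (htn : D.IsTreeNode (D.tail e)) : e ∈ S ∨ D.sib e ∈ S := by
  have hnl : ¬ D.IsLeaf (D.tail e) := by
    intro hl; have := htn.2; have := hl.2; omega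
  obtain ⟨a, haS, hat⟩ := hsupp.2.2 _ hnl
  rcases sib_cases (tn_outdeg_two hsb htn) hat with h | h
  · exact Or.inl (h ▸ haS)
  · exact Or.inr (h ▸ haS)

noncomputable def buildP (D : MGraph V A) [Nonempty A] (S : Set A) :
    Finset (Finset D.BArc) :=
  ((D.midsF S).image (fun m => {D.botOf S m, D.bar m, D.bar (D.sib m)})) ∪
    ((D.cherryF S).image (fun t => {D.bar (D.outArc t), D.bar (D.sib (D.outArc t))}))

lemma buildP_mem {S : Set A} {σ : Finset D.BArc} :
    σ ∈ D.buildP S ↔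
      (∃ m, (D.IsRetic (D.head m) ∧ m ∉ S) ∧
        σ = {D.botOf S m, D.bar m, D.bar (D.sib m)}) ∨
      (∃ t, (D.IsTreeNode t ∧ D.outArc t ∈ S ∧ D.sib (D.outArc t) ∈ S) ∧
        σ = {D.bar (D.outArc t), D.bar (D.sib (D.outArc t))}) := by
  unfold buildP
  rw [Finset.mem_union, Finset.mem_image, Finset.mem_image]
  constructor
  · rintro (⟨m, hm, heq⟩ | ⟨t, ht, heq⟩)
    · exact Or.inl ⟨m, mem_midsF.1 hm, heq.symm⟩
    · exact Or.inr ⟨t, mem_cherryF.1 ht, heq.symm⟩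
  · rintro (⟨m, hm, heq⟩ | ⟨t, ht, heq⟩)
    · exact Or.inl ⟨m, mem_midsF.2 hm, heq.symm⟩
    · exact Or.inr ⟨t, mem_cherryF.2 ht, heq.symm⟩

lemma outArc_ne_of_tn (hsb : D.IsSemiBinary) {m : A} (hret : D.IsRetic (D.head m))
    {e : A} (hte : D.IsTreeNode (D.tail e)) : D.outArc (D.head m) ≠ e := by
  intro h
  have := outArc_tail_retic hret
  rw [h] at this
  rw [this] at hte
  exact hret.not_treeNode hte


lemma botOf_eval {S : Set A} {v : V}
    (hcard : ((D.inArcs v).filter (fun a => a ∉ S)).card = D.bulgeMult (D.outArc v))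
    {m : A} (hm : D.head m = v) (hmem : m ∈ (D.inArcs v).filter (fun a => a ∉ S)) :
    D.botOf S m = ⟨D.outArc v,
      Fin.cast hcard (((D.inArcs v).filter (fun a => a ∉ S)).equivFin ⟨m, hmem⟩)⟩ := by
  subst hm
  unfold botOf
  rw [dif_pos ⟨hcard, hmem⟩]

lemma botOf_inj {S : Set A} (hsupp : D.IsSupportTree S) {v : V} (hv : D.IsRetic v)
    {m m' : A} (hm : D.head m = v) (hmS : m ∉ S) (hm' : D.head m' = v) (hm'S : m' ∉ S)
    (heq : D.botOf S m = D.botOf S m') : m = m' := by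
  have hcard := card_nonchosen hsupp hv
  have hmem : m ∈ (D.inArcs v).filter (fun a => a ∉ S) :=
    Finset.mem_filter.2 ⟨mem_inArcs.2 hm, hmS⟩
  have hmem' : m' ∈ (D.inArcs v).filter (fun a => a ∉ S) :=
    Finset.mem_filter.2 ⟨mem_inArcs.2 hm', hm'S⟩
  rw [botOf_eval hcard hm hmem, botOf_eval hcard hm' hmem'] at heq
  have h2 := sigma_mk_injective heq
  have h3 : ((D.inArcs v).filter (fun a => a ∉ S)).equivFin ⟨m, hmem⟩ =
      ((D.inArcs v).filter (fun a => a ∉ S)).equivFin ⟨m', hmem'⟩ := by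
    apply Fin.ext
    have := congrArg Fin.val h2
    simpa using this
  have := ((D.inArcs v).filter (fun a => a ∉ S)).equivFin.injective h3
  exact congrArg Subtype.val this

lemma botOf_surj {S : Set A} (hsupp : D.IsSupportTree S) {v : V} (hv : D.IsRetic v)
    {x : D.BArc} (hx : D.tail x.1 = v) :
    ∃ m, D.head m = v ∧ m ∉ S ∧ D.botOf S m = x := by
  obtain ⟨a, i⟩ := x
  have ha : a = D.outArc v := outArc_eq_retic hv hx
  subst ha
  have hcard := card_nonchosen hsupp hv
  set N := (D.inArcs v).filter (fun b => b ∉ S) with hN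
  set p := N.equivFin.symm (Fin.cast hcard.symm i) with hp
  have hmem : p.1 ∈ N := p.2
  have hhead : D.head p.1 = v := mem_inArcs.1 (Finset.mem_filter.1 hmem).1
  have hS : p.1 ∉ S := (Finset.mem_filter.1 hmem).2
  refine ⟨p.1, hhead, hS, ?_⟩
  rw [botOf_eval hcard hhead hmem]
  congr 1
  have hpe : (⟨p.1, hmem⟩ : {b // b ∈ N}) = p := rfl
  rw [hpe, hp, Equiv.apply_symm_apply]
  apply Fin.ext
  simp

lemma bar_ne_botOf (hsb : D.IsSemiBinary) {S : Set A} {m e : A}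
    (hret : D.IsRetic (D.head m)) (hte : D.IsTreeNode (D.tail e)) :
    D.bar e ≠ D.botOf S m := by
  intro h
  have hfst : e = D.outArc (D.head m) := by
    have := congrArg Sigma.fst h
    rw [bar_fst, botOf_fst] at this
    exact this
  exact outArc_ne_of_tn hsb hret hte hfst.symm

lemma bar_inj {e f : A} (h : D.bar e = D.bar f) : e = f := congrArg Sigma.fst h

theorem buildP_cover (hsb : D.IsSemiBinary) {S : Set A} (hsupp : D.IsSupportTree S) :
    D.IsBulgedCherryCover (D.buildP S) := by
  have hnp := hsb.1.2.1
  refine ⟨?_, ?_, ?_⟩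
  · -- every element is a shape
    intro σ hσ
    rcases buildP_mem.1 hσ with ⟨m, ⟨hret, hmS⟩, rfl⟩ | ⟨t, ⟨htn, heS, hsS⟩, rfl⟩
    · right
      have htm : D.IsTreeNode (D.tail m) := (nonchosen_props hsb hsupp hmS).2
      have hs2 := tn_outdeg_two hsb htm
      have hsib := sib_spec hs2
      have htsib : D.IsTreeNode (D.tail (D.sib m)) := by rw [hsib.1]; exact htm
      refine ⟨D.bar m, D.botOf S m, D.bar (D.sib m),
        Ne.symm (bar_ne_botOf hsb hret htm), ?_, ?_, rfl, ?_, hsib.1.symm, ?_, htm⟩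
      · exact fun h => (bar_ne_botOf hsb hret htsib) h.symm
      · exact fun h => hsib.2 (bar_inj h).symm
      · show D.head m = D.tail (D.botOf S m).1
        rw [botOf_fst, outArc_tail_retic hret]
      · show D.IsRetic (D.tail (D.botOf S m).1)
        rw [botOf_fst, outArc_tail_retic hret]; exact hret
    · left
      have hot : D.tail (D.outArc t) = t :=
        outArc_tail (exists_tail_of_outdeg_pos (by rw [tn_outdeg_two hsb htn]; omega))
      have hs2 : D.outdeg (D.tail (D.outArc t)) = 2 := by
        rw [hot]; exact tn_outdeg_two hsb htn
      have hsib := sib_spec hs2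
      refine ⟨D.bar (D.outArc t), D.bar (D.sib (D.outArc t)),
        fun h => hsib.2 (bar_inj h).symm, rfl, hsib.1.symm, ?_⟩
      intro h
      exact hsib.2 (hnp _ _ hsib.1 (h : D.head (D.outArc t) = D.head (D.sib (D.outArc t))).symm)
  · -- exactly one shape per non-root arc
    intro x hnr
    rcases tail_cases hsb x.1 with hroot | htnx | hretx
    · exact absurd hroot hnr
    · -- tree-node tail
      have hxbar : x = D.bar x.1 := barc_eq_bar (fun hr => hr.not_treeNode htnx)
      have hs2 : D.outdeg (D.tail x.1) = 2 := tn_outdeg_two hsb htnx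
      have hsiba := sib_spec hs2
      by_cases haS : x.1 ∈ S
      · by_cases hsaS : D.sib x.1 ∈ S
        · -- cherry case
          have hot : D.tail (D.outArc (D.tail x.1)) = D.tail x.1 := outArc_tail ⟨x.1, rfl⟩
          have hoc := sib_cases hs2 hot
          have hcf : D.IsTreeNode (D.tail x.1) ∧ D.outArc (D.tail x.1) ∈ S ∧
              D.sib (D.outArc (D.tail x.1)) ∈ S := by
            rcases hoc with h | h
            · rw [h]; exact ⟨htnx, haS, hsaS⟩
            · rw [h, sib_sib hs2]; exact ⟨htnx, hsaS, haS⟩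
          refine ⟨{D.bar (D.outArc (D.tail x.1)), D.bar (D.sib (D.outArc (D.tail x.1)))},
            ⟨buildP_mem.2 (Or.inr ⟨D.tail x.1, hcf, rfl⟩), ?_⟩, ?_⟩
          · rcases hoc with h | h
            · rw [h, ← hxbar]; simp
            · rw [h, sib_sib hs2, ← hxbar]; simp
          · rintro σ' ⟨hσ', hxσ'⟩
            rcases buildP_mem.1 hσ' with ⟨m, ⟨hretm, hmS⟩, rfl⟩ | ⟨t', ⟨htn', heS', hsS'⟩, rfl⟩
            · exfalso
              have htm := (nonchosen_props hsb hsupp hmS).2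
              have hs2m := tn_outdeg_two hsb htm
              simp only [Finset.mem_insert, Finset.mem_singleton] at hxσ'
              rcases hxσ' with h | h | h
              · have : x.1 = D.outArc (D.head m) := by rw [h, botOf_fst]
                exact outArc_ne_of_tn hsb hretm htnx this.symm
              · have : x.1 = m := by rw [h, bar_fst]
                exact hmS (this ▸ haS)
              · have hasm : x.1 = D.sib m := by rw [h, bar_fst]
                have hm : m = D.sib x.1 := by rw [hasm, sib_sib hs2m]
                exact hmS (hm ▸ hsaS)
            · simp only [Finset.mem_insert, Finset.mem_singleton] at hxσ'
              have hot' : D.tail (D.outArc t') = t' :=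
                outArc_tail (exists_tail_of_outdeg_pos (by rw [tn_outdeg_two hsb htn']; omega))
              rcases hxσ' with h | h
              · have hae : x.1 = D.outArc t' := by rw [h, bar_fst]
                have ht' : t' = D.tail x.1 := by rw [hae, hot']
                rw [ht']
              · have hae : x.1 = D.sib (D.outArc t') := by rw [h, bar_fst]
                have hs2o : D.outdeg (D.tail (D.outArc t')) = 2 := by
                  rw [hot']; exact tn_outdeg_two hsb htn'
                have h1 : D.tail (D.sib (D.outArc t')) = t' := by rw [(sib_spec hs2o).1, hot']
                have ht' : t' = D.tail x.1 := by rw [hae, h1]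
                rw [ht']
        · -- x.1 ∈ S, sib ∉ S : top of the sibling's shape
          have hretsa : D.IsRetic (D.head (D.sib x.1)) := (nonchosen_props hsb hsupp hsaS).1
          refine ⟨{D.botOf S (D.sib x.1), D.bar (D.sib x.1), D.bar (D.sib (D.sib x.1))},
            ⟨buildP_mem.2 (Or.inl ⟨D.sib x.1, ⟨hretsa, hsaS⟩, rfl⟩), ?_⟩, ?_⟩
          · rw [sib_sib hs2, ← hxbar]; simp
          · rintro σ' ⟨hσ', hxσ'⟩
            rcases buildP_mem.1 hσ' with ⟨m, ⟨hretm, hmS⟩, rfl⟩ | ⟨t', ⟨htn', heS', hsS'⟩, rfl⟩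
            · have htm := (nonchosen_props hsb hsupp hmS).2
              have hs2m := tn_outdeg_two hsb htm
              simp only [Finset.mem_insert, Finset.mem_singleton] at hxσ'
              rcases hxσ' with h | h | h
              · exfalso
                have : x.1 = D.outArc (D.head m) := by rw [h, botOf_fst]
                exact outArc_ne_of_tn hsb hretm htnx this.symm
              · exfalso
                have : x.1 = m := by rw [h, bar_fst]
                exact hmS (this ▸ haS)
              · have hasm : x.1 = D.sib m := by rw [h, bar_fst]
                have hm : m = D.sib x.1 := by rw [hasm, sib_sib hs2m]
                rw [hm]
            · exfalso
              simp only [Finset.mem_insert, Finset.mem_singleton] at hxσ'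
              have hot' : D.tail (D.outArc t') = t' :=
                outArc_tail (exists_tail_of_outdeg_pos (by rw [tn_outdeg_two hsb htn']; omega))
              have hs2o : D.outdeg (D.tail (D.outArc t')) = 2 := by
                rw [hot']; exact tn_outdeg_two hsb htn'
              rcases hxσ' with h | h
              · have hae : x.1 = D.outArc t' := by rw [h, bar_fst]
                have : D.sib x.1 ∈ S := by rw [hae]; exact hsS'
                exact hsaS this
              · have hae : x.1 = D.sib (D.outArc t') := by rw [h, bar_fst]
                have : D.outArc t' = D.sib x.1 := by rw [hae, sib_sib hs2o]
                exact hsaS (this ▸ heS')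
      · -- x.1 ∉ S : mid of its own shape
        have hreta : D.IsRetic (D.head x.1) := (nonchosen_props hsb hsupp haS).1
        refine ⟨{D.botOf S x.1, D.bar x.1, D.bar (D.sib x.1)},
          ⟨buildP_mem.2 (Or.inl ⟨x.1, ⟨hreta, haS⟩, rfl⟩), by rw [← hxbar]; simp⟩, ?_⟩
        rintro σ' ⟨hσ', hxσ'⟩
        rcases buildP_mem.1 hσ' with ⟨m, ⟨hretm, hmS⟩, rfl⟩ | ⟨t', ⟨htn', heS', hsS'⟩, rfl⟩
        · have htm := (nonchosen_props hsb hsupp hmS).2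
          have hs2m := tn_outdeg_two hsb htm
          simp only [Finset.mem_insert, Finset.mem_singleton] at hxσ'
          rcases hxσ' with h | h | h
          · exfalso
            have : x.1 = D.outArc (D.head m) := by rw [h, botOf_fst]
            exact outArc_ne_of_tn hsb hretm htnx this.symm
          · have : m = x.1 := by rw [h, bar_fst]
            rw [this]
          · exfalso
            have hasm : x.1 = D.sib m := by rw [h, bar_fst]
            have hm : m = D.sib x.1 := by rw [hasm, sib_sib hs2m]
            rcases some_out_in_S hsb hsupp htnx with hc | hc
            · exact haS hc
            · exact hmS (hm ▸ hc)
        · exfalso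
          simp only [Finset.mem_insert, Finset.mem_singleton] at hxσ'
          rcases hxσ' with h | h
          · have hae : x.1 = D.outArc t' := by rw [h, bar_fst]
            exact haS (hae ▸ heS')
          · have hae : x.1 = D.sib (D.outArc t') := by rw [h, bar_fst]
            exact haS (hae ▸ hsS')
    · -- retic tail : x is a bottom copy
      obtain ⟨m₀, hm₀h, hm₀S, hm₀b⟩ := botOf_surj hsupp hretx rfl
      have hretm₀ : D.IsRetic (D.head m₀) := by rw [hm₀h]; exact hretx
      refine ⟨{D.botOf S m₀, D.bar m₀, D.bar (D.sib m₀)},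
        ⟨buildP_mem.2 (Or.inl ⟨m₀, ⟨hretm₀, hm₀S⟩, rfl⟩), by rw [hm₀b]; simp⟩, ?_⟩
      rintro σ' ⟨hσ', hxσ'⟩
      rcases buildP_mem.1 hσ' with ⟨m, ⟨hretm, hmS⟩, rfl⟩ | ⟨t', ⟨htn', heS', hsS'⟩, rfl⟩
      · have htm := (nonchosen_props hsb hsupp hmS).2
        simp only [Finset.mem_insert, Finset.mem_singleton] at hxσ'
        rcases hxσ' with h | h | h
        · have hhm : D.head m = D.tail x.1 := by
            rw [h, botOf_fst, outArc_tail_retic hretm]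
          have hmm : m = m₀ :=
            botOf_inj hsupp hretx hhm hmS hm₀h hm₀S (by rw [← h, hm₀b])
          rw [hmm]
        · exfalso
          have : x.1 = m := by rw [h, bar_fst]
          rw [this] at hretx
          exact hretx.not_treeNode htm
        · exfalso
          have : x.1 = D.sib m := by rw [h, bar_fst]
          rw [this, (sib_spec (tn_outdeg_two hsb htm)).1] at hretx
          exact hretx.not_treeNode htm
      · exfalso
        simp only [Finset.mem_insert, Finset.mem_singleton] at hxσ'
        have hot' : D.tail (D.outArc t') = t' :=
          outArc_tail (exists_tail_of_outdeg_pos (by rw [tn_outdeg_two hsb htn']; omega))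
        have hs2o : D.outdeg (D.tail (D.outArc t')) = 2 := by
          rw [hot']; exact tn_outdeg_two hsb htn'
        rcases hxσ' with h | h
        · have : x.1 = D.outArc t' := by rw [h, bar_fst]
          rw [this, hot'] at hretx
          exact hretx.not_treeNode htn'
        · have : x.1 = D.sib (D.outArc t') := by rw [h, bar_fst]
          rw [this, (sib_spec hs2o).1, hot'] at hretx
          exact hretx.not_treeNode htn'
  · -- no root arcs in shapes
    intro σ hσ x hx
    intro hroot
    have hroot' : D.IsRoot (D.tail x.1) := hroot
    rcases buildP_mem.1 hσ with ⟨m, ⟨hretm, hmS⟩, rfl⟩ | ⟨t', ⟨htn', heS', hsS'⟩, rfl⟩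
    · have htm := (nonchosen_props hsb hsupp hmS).2
      simp only [Finset.mem_insert, Finset.mem_singleton] at hx
      rcases hx with h | h | h
      · rw [h, botOf_fst, outArc_tail_retic hretm] at hroot'
        exact hretm.not_root hroot'
      · rw [h] at hroot'
        exact htm.not_root hroot'
      · rw [h, bar_fst, (sib_spec (tn_outdeg_two hsb htm)).1] at hroot'
        exact htm.not_root hroot'
    · simp only [Finset.mem_insert, Finset.mem_singleton] at hx
      have hot' : D.tail (D.outArc t') = t' :=
        outArc_tail (exists_tail_of_outdeg_pos (by rw [tn_outdeg_two hsb htn']; omega))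
      have hs2o : D.outdeg (D.tail (D.outArc t')) = 2 := by
        rw [hot']; exact tn_outdeg_two hsb htn'
      rcases hx with h | h
      · rw [h, bar_fst, hot'] at hroot'
        exact htn'.not_root hroot'
      · rw [h, bar_fst, (sib_spec hs2o).1, hot'] at hroot'
        exact htn'.not_root hroot'


lemma suppOf_buildP (hsb : D.IsSemiBinary) {S : Set A} (hsupp : D.IsSupportTree S) :
    D.suppOf (D.coverClass (D.buildP S)) = S := by
  ext a
  rw [mem_suppOf_iff]
  constructor
  · intro hnpm
    by_contra haS
    apply hnpm
    have hret := (nonchosen_props hsb hsupp haS).1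
    have htn := (nonchosen_props hsb hsupp haS).2
    refine ⟨{D.botOf S a, D.bar a, D.bar (D.sib a)},
      buildP_mem.2 (Or.inl ⟨a, ⟨hret, haS⟩, rfl⟩), ?_⟩
    exact (midIn_rc hsb hret htn (botOf_fst S a) rfl a).2 rfl
  · intro haS hpm
    obtain ⟨σ, hσ, hmid⟩ := hpm
    rcases buildP_mem.1 hσ with ⟨m, ⟨hretm, hmS⟩, rfl⟩ | ⟨t', ⟨htn', heS', hsS'⟩, rfl⟩
    · have htm := (nonchosen_props hsb hsupp hmS).2
      have : a = m := (midIn_rc hsb hretm htm (botOf_fst S m) rfl a).1 hmid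
      exact hmS (this ▸ haS)
    · have hot' : D.tail (D.outArc t') = t' :=
        outArc_tail (exists_tail_of_outdeg_pos (by rw [tn_outdeg_two hsb htn']; omega))
      have htne : D.IsTreeNode (D.tail (D.outArc t')) := by rw [hot']; exact htn'
      have hs2o : D.outdeg (D.tail (D.outArc t')) = 2 := tn_outdeg_two hsb htne
      exact midIn_cherry (sib_spec hs2o).1 htne rfl a hmid

end MGraph
-- AUXEND

/-- For a semi-binary network, the number of non-isomorphic cherry
covers of the bulged version equals the number of support trees. -/
theorem stmt2 {V A : Type} [Fintype V] [Fintype A] [DecidableEq V] [DecidableEq A]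
    (D : MGraph V A) (hsb : D.IsSemiBinary) :
    {M : Multiset (Finset A) |
        ∃ P : Finset (Finset D.BArc), D.IsBulgedCherryCover P ∧ D.coverClass P = M}.ncard
      = {S : Set A | D.IsSupportTree S}.ncard := by
  have hne : Nonempty A := by
    obtain ⟨r, hr, _⟩ := hsb.1.2.2.1
    have h1 : 0 < D.outdeg r := by rw [hr.2]; omega
    have h2 : Nonempty {a : A // D.tail a = r} :=
      Fintype.card_pos_iff.1 (by simpa [MGraph.outdeg] using h1)
    obtain ⟨a, _⟩ := h2
    exact ⟨a⟩
  haveI := hne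
  have himg : D.suppOf '' {M : Multiset (Finset A) |
      ∃ P : Finset (Finset D.BArc), D.IsBulgedCherryCover P ∧ D.coverClass P = M}
      = {S : Set A | D.IsSupportTree S} := by
    ext S
    constructor
    · rintro ⟨M, ⟨P, hP, rfl⟩, rfl⟩
      exact MGraph.suppOf_isSupportTree hsb hP
    · intro hS
      exact ⟨D.coverClass (D.buildP S), ⟨D.buildP S, MGraph.buildP_cover hsb hS, rfl⟩,
        MGraph.suppOf_buildP hsb hS⟩
  have hinj : Set.InjOn D.suppOf {M : Multiset (Finset A) |
      ∃ P : Finset (Finset D.BArc), D.IsBulgedCherryCover P ∧ D.coverClass P = M} := by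
    rintro M ⟨P, hP, rfl⟩ M' ⟨P', hP', rfl⟩ heq
    rw [MGraph.coverClass_eq_canon hsb hP, MGraph.coverClass_eq_canon hsb hP', heq]
  rw [← himg, Set.ncard_image_of_injOn hinj]
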